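/- arXiv:1105.1857 — 3 statements merged into one kernel-verified Lean document; each statement's English description precedes it below -/
import Mathlib

section
/- (Linear uniform motion preserves sails.) Let α(x) = a·x + b and β(x) = c·x + d be real affine forms on ℝ² (a, c ∈ (ℝ²)*, b,d ∈ ℝ), extended to ℂ². Let x, y ∈ ℝ². If x + iy ∈ S(α,β), i.e., α(x+iy)β(x+iy) ≠ 0 and α(x+iy)/β(x+iy) ∈ ℝ_{<0}, then for all t ∈ ℝ, (x + t·y) + iy ∈ S(α,β). Conversely, if x + iy ∉ S(α,β) and x+iy is in the domain where αβ ≠ 0, then (x+t·y)+iy ∉ S(α,β) for all t ∈ ℝ for which α·β is nonzero at (x+ty)+iy. -/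
open Complex

/-- Complex evaluation of a real affine form `x ↦ a·x + b` at `x + iy`. -/
noncomputable def affC (a : ℝ × ℝ) (b : ℝ) (x y : ℝ × ℝ) : ℂ :=
  (a.1 : ℂ) * ((x.1 : ℂ) + (y.1 : ℂ) * I) +
  (a.2 : ℂ) * ((x.2 : ℂ) + (y.2 : ℂ) * I) + (b : ℂ)

/-- Membership of `x + iy` in the sail `S(α, β)`. -/
def sailMem (a : ℝ × ℝ) (b : ℝ) (c : ℝ × ℝ) (d : ℝ) (x y : ℝ × ℝ) : Prop :=
  affC a b x y * affC c d x y ≠ 0 ∧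
  ∃ r : ℝ, r < 0 ∧ affC a b x y / affC c d x y = (r : ℂ)

lemma affC_im (a : ℝ × ℝ) (b : ℝ) (x y : ℝ × ℝ) :
    (affC a b x y).im = a.1 * y.1 + a.2 * y.2 := by
  simp [affC]

lemma affC_shift (a : ℝ × ℝ) (b : ℝ) (x y : ℝ × ℝ) (t : ℝ) :
    affC a b (x.1 + t * y.1, x.2 + t * y.2) y =
      affC a b x y + ((t * (a.1 * y.1 + a.2 * y.2) : ℝ) : ℂ) := by
  simp only [affC]
  push_cast
  ring

lemma sail_forward (a c : ℝ × ℝ) (b d : ℝ) (x y : ℝ × ℝ)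
    (h : sailMem a b c d x y) (t : ℝ) :
    sailMem a b c d (x.1 + t * y.1, x.2 + t * y.2) y := by
  obtain ⟨hne, r, hr, hdiv⟩ := h
  have hB : affC c d x y ≠ 0 := fun h0 => hne (by rw [h0, mul_zero])
  have hA : affC a b x y = (r : ℂ) * affC c d x y := by
    field_simp at hdiv; linear_combination hdiv
  -- imaginary parts
  have him : a.1 * y.1 + a.2 * y.2 = r * (c.1 * y.1 + c.2 * y.2) := by
    have := congrArg Complex.im hA
    simpa [affC_im, Complex.mul_im] using this
  have hA' : affC a b (x.1 + t * y.1, x.2 + t * y.2) y =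
      (r : ℂ) * affC c d (x.1 + t * y.1, x.2 + t * y.2) y := by
    rw [affC_shift, affC_shift, hA, him]
    push_cast
    ring
  have hB' : affC c d (x.1 + t * y.1, x.2 + t * y.2) y ≠ 0 := by
    intro h0
    have him0 : (affC c d (x.1 + t * y.1, x.2 + t * y.2) y).im =
        c.1 * y.1 + c.2 * y.2 := affC_im ..
    rw [h0] at him0
    have hsc : c.1 * y.1 + c.2 * y.2 = 0 := by simpa using him0.symm
    rw [affC_shift, hsc, mul_zero] at h0
    exact hB (by simpa using h0)
  have hr0 : (r : ℂ) ≠ 0 := by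
    exact_mod_cast (ne_of_lt hr)
  refine ⟨?_, r, hr, ?_⟩
  · rw [hA']
    exact mul_ne_zero (mul_ne_zero hr0 hB') hB'
  · rw [hA', mul_div_assoc, div_self hB', mul_one]

/-- Linear uniform motion preserves sails: if `x + iy ∈ S(α,β)` then
`(x + t·y) + iy ∈ S(α,β)` for all real `t`; conversely, a point not in the
sail (with `αβ ≠ 0` there) never moves into the sail, at any time `t` where
`αβ` remains nonzero. -/
theorem sail_linear_uniform_motion (a c : ℝ × ℝ) (b d : ℝ) (x y : ℝ × ℝ) :
    (sailMem a b c d x y →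
      ∀ t : ℝ, sailMem a b c d (x.1 + t * y.1, x.2 + t * y.2) y) ∧
    ((¬ sailMem a b c d x y) → affC a b x y * affC c d x y ≠ 0 →
      ∀ t : ℝ,
        affC a b (x.1 + t * y.1, x.2 + t * y.2) y *
          affC c d (x.1 + t * y.1, x.2 + t * y.2) y ≠ 0 →
        ¬ sailMem a b c d (x.1 + t * y.1, x.2 + t * y.2) y) := by
  constructor
  · exact fun h t => sail_forward a c b d x y h t
  · intro h _ t _ hmem
    apply h
    have := sail_forward a c b d (x.1 + t * y.1, x.2 + t * y.2) y hmem (-t)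
    have hx : ((x.1 + t * y.1) + (-t) * y.1, (x.2 + t * y.2) + (-t) * y.2) = x := by
      ext <;> ring
    rwa [hx] at this
end

section
/- With γ and S as before (γ(t) = r(cosθ₀, sinθ₀) + iε(cos t, sin t), S = {z₂/z₁ ∈ ℝ_{<0}}, with π/2 < θ₀ < π or 3π/2 < θ₀ < 2π so that sinθ₀cosθ₀ < 0): the imaginary part of φ_*( γ'(t) ) at t = θ₀ is positive and at t = θ₀ + π is negative, where φ(z₁,z₂) = z₂/z₁. Concretely: Im( d/dt [ (r sinθ₀ + iε sin t)/(r cosθ₀ + iε cos t) ] ) > 0 at t = θ₀ and < 0 at t = θ₀ + π. -/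
/-!
Write `f_ε(t) = (r sin θ₀ + iε sin t) / (r cos θ₀ + iε cos t)`. Since
`cos θ₀ cos t + sin θ₀ sin t = 1` at `t = θ₀`, the quotient rule gives
`f_ε'(θ₀) = (ε² + iεr) / (cos²θ₀ (r² + ε²))`, whose imaginary part is positive. As `sin` and `cos`
change sign under `t ↦ t + π`, `f_ε(t + π) = f_{-ε}(t)`, so the derivative at `θ₀ + π` is the same
expression with `-ε` for `ε`, and its imaginary part is negative.
-/

open Complex Real

/-- `z₂ / z₁` along `γ(t) = r (cos θ₀, sin θ₀) + iε (cos t, sin t)`. -/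
noncomputable def circleQuotient (r θ₀ ε t : ℝ) : ℂ :=
  ((r * Real.sin θ₀ : ℂ) + (ε * Real.sin t : ℂ) * I) /
    ((r * Real.cos θ₀ : ℂ) + (ε * Real.cos t : ℂ) * I)

theorem hasDerivAt_circleQuotient (r θ₀ ε t : ℝ)
    (hden : (r * Real.cos θ₀ : ℂ) + (ε * Real.cos t : ℂ) * I ≠ 0) :
    HasDerivAt (circleQuotient r θ₀ ε)
      (((ε * r * Real.cos (t - θ₀) : ℝ) * I - (ε : ℂ) ^ 2) /
        ((r * Real.cos θ₀ : ℂ) + (ε * Real.cos t : ℂ) * I) ^ 2) t := by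
  have hnum : HasDerivAt (fun t : ℝ => (r * Real.sin θ₀ : ℂ) + (ε * Real.sin t : ℂ) * I)
      ((ε * Real.cos t : ℂ) * I) t := by
    simpa using (((Real.hasDerivAt_sin t).const_mul ε).ofReal_comp.mul_const I).const_add
      (r * Real.sin θ₀ : ℂ)
  have hden' : HasDerivAt (fun t : ℝ => (r * Real.cos θ₀ : ℂ) + (ε * Real.cos t : ℂ) * I)
      (-(ε * Real.sin t : ℂ) * I) t := by
    simpa using (((Real.hasDerivAt_cos t).const_mul ε).ofReal_comp.mul_const I).const_add
      (r * Real.cos θ₀ : ℂ)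
  refine (hnum.div hden' hden).congr_deriv (congrArg (· / _) ?_)
  have hpyth : (Real.sin t : ℂ) ^ 2 + (Real.cos t : ℂ) ^ 2 = 1 := by
    exact_mod_cast Real.sin_sq_add_cos_sq t
  rw [Real.cos_sub]
  simp only [ofReal_mul, ofReal_add]
  linear_combination (ε : ℂ) ^ 2 * I ^ 2 * hpyth + (ε : ℂ) ^ 2 * I_sq

theorem circleQuotient_add_pi (r θ₀ ε t : ℝ) :
    circleQuotient r θ₀ ε (t + π) = circleQuotient r θ₀ (-ε) t := by
  simp [circleQuotient, Real.sin_add_pi, Real.cos_add_pi]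

theorem deriv_circleQuotient_add_pi (r θ₀ ε t : ℝ) :
    deriv (circleQuotient r θ₀ ε) (t + π) = deriv (circleQuotient r θ₀ (-ε)) t := by
  rw [← deriv_comp_add_const]
  simp only [circleQuotient_add_pi]

theorem im_deriv_circleQuotient_self {r θ₀ : ℝ} (ε : ℝ) (hr : r ≠ 0) (hc : Real.cos θ₀ ≠ 0) :
    (deriv (circleQuotient r θ₀ ε) θ₀).im = ε * r / (Real.cos θ₀ ^ 2 * (r ^ 2 + ε ^ 2)) := by
  have hc' : (Real.cos θ₀ : ℂ) ≠ 0 := by exact_mod_cast hc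
  have hrε : (r : ℂ) + ε * I ≠ 0 := fun h => hr (by simpa using congrArg re h)
  have hnorm : (r : ℂ) ^ 2 + (ε : ℂ) ^ 2 ≠ 0 := by
    exact_mod_cast (by positivity : r ^ 2 + ε ^ 2 ≠ 0)
  have hden : (r * Real.cos θ₀ : ℂ) + (ε * Real.cos θ₀ : ℂ) * I ≠ 0 := by
    rw [show (r * Real.cos θ₀ : ℂ) + (ε * Real.cos θ₀ : ℂ) * I = Real.cos θ₀ * (r + ε * I) by ring]
    exact mul_ne_zero hc' hrε
  -- `iε (r + iε) / (cos²θ₀ (r + iε)²)`, made real-denominator by multiplying through by `r - iε`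
  have hvalue : ((ε * r * Real.cos (θ₀ - θ₀) : ℝ) * I - (ε : ℂ) ^ 2) /
      ((r * Real.cos θ₀ : ℂ) + (ε * Real.cos θ₀ : ℂ) * I) ^ 2 =
      ((ε ^ 2 / (Real.cos θ₀ ^ 2 * (r ^ 2 + ε ^ 2)) : ℝ) : ℂ) +
        ((ε * r / (Real.cos θ₀ ^ 2 * (r ^ 2 + ε ^ 2)) : ℝ) : ℂ) * I := by
    rw [sub_self, Real.cos_zero, div_eq_iff (pow_ne_zero 2 hden)]
    simp only [ofReal_mul, ofReal_div, ofReal_pow, ofReal_add, ofReal_one]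
    field_simp
    linear_combination -(2 * (ε : ℂ) ^ 2 * r ^ 2 + (ε : ℂ) ^ 3 * r * I + (ε : ℂ) ^ 4) * I_sq
  rw [(hasDerivAt_circleQuotient r θ₀ ε θ₀ hden).deriv, hvalue]
  simp only [add_im, ofReal_im, mul_im, ofReal_re, I_re, I_im]
  ring

/-- Signs of the imaginary part of the derivative of `φ∘γ` at the two
crossing times: for `φ(z₁,z₂) = z₂/z₁` and
`γ(t) = r(cosθ₀, sinθ₀) + iε(cos t, sin t)` with `sinθ₀cosθ₀ < 0`, the
imaginary part of `(φ∘γ)'` is positive at `t = θ₀` and negative at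
`t = θ₀ + π`. -/
theorem crossing_derivative_signs (r ε θ₀ : ℝ) (hr : 0 < r) (hε : 0 < ε)
    (hsc : Real.sin θ₀ * Real.cos θ₀ < 0) :
    0 < (deriv (fun t : ℝ =>
        ((r * Real.sin θ₀ : ℂ) + (ε * Real.sin t : ℂ) * I) /
        ((r * Real.cos θ₀ : ℂ) + (ε * Real.cos t : ℂ) * I)) θ₀).im ∧
    (deriv (fun t : ℝ =>
        ((r * Real.sin θ₀ : ℂ) + (ε * Real.sin t : ℂ) * I) /
        ((r * Real.cos θ₀ : ℂ) + (ε * Real.cos t : ℂ) * I)) (θ₀ + π)).im < 0 := by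
  have hc : Real.cos θ₀ ≠ 0 := fun h => by simp [h] at hsc
  change 0 < (deriv (circleQuotient r θ₀ ε) θ₀).im ∧
    (deriv (circleQuotient r θ₀ ε) (θ₀ + π)).im < 0
  rw [deriv_circleQuotient_add_pi, im_deriv_circleQuotient_self ε hr.ne' hc,
    im_deriv_circleQuotient_self (-ε) hr.ne' hc]
  constructor
  · positivity
  · exact div_neg_of_neg_of_pos (by nlinarith) (by positivity)
end

section
/- (Equivalence of the dual relation and the positive homogeneous relation, Case 1.) Let F be the free group on γ₁,…,γₙ, ηᵢ = γᵢ⋯γₙ. Fix indices 1 < i₁ < i₂ < … < i_{2k} < n partitioning {1,…,n} into blocks alternating 'right' and 'left': R = {1,…,i₁-1} ∪ {i₂,…,i₃-1} ∪ … ∪ {i_{2k},…,n} and L = {i₁,…,i₂-1} ∪ {i₃,…,i₄-1} ∪ … ∪ {i_{2k-1},…,i_{2k}-1}. Write R = {r₁<…<r_p}, L = {l₁<…<l_q}. Let E = η_{i₁}^{-1}η_{i₂}η_{i₃}^{-1}⋯η_{i_{2k}} · η_{i₁}η_{i₂}^{-1}η_{i₃}⋯η_{i_{2k}}^{-1}.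 Then (γ₁⋯γₙ)·E = (γ_{r₁}⋯γ_{r_p})(γ_{l₁}⋯γ_{l_q}) as elements of F. -/
open FreeGroup


namespace DualRelAux

/-- word of positive letters -/
def pw (l : List ℕ) : FreeGroup ℕ := (l.map FreeGroup.of).prod

/-- `η_m = γ_m ⋯ γ_n` -/
def eta (n m : ℕ) : FreeGroup ℕ := pw (List.range' m (n + 1 - m))

lemma pw_append (l₁ l₂ : List ℕ) : pw (l₁ ++ l₂) = pw l₁ * pw l₂ := by
  simp [pw]

lemma range'_split {a b c : ℕ} (hab : a ≤ b) (hbc : b ≤ c) :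
    List.range' a (c - a) = List.range' a (b - a) ++ List.range' b (c - b) := by
  have h1 := List.range'_append_1 (s := a) (m := b - a) (n := c - b)
  rw [show a + (b - a) = b by omega] at h1
  rw [h1]
  congr 1
  omega

lemma eta_split {n a b : ℕ} (hab : a ≤ b) (hb : b ≤ n + 1) :
    eta n a = pw (List.range' a (b - a)) * eta n b := by
  rw [eta, eta, ← pw_append, ← range'_split hab hb]

lemma eta_mul_inv_eta {n a b : ℕ} (hab : a ≤ b) (hb : b ≤ n + 1) :
    eta n a * (eta n b)⁻¹ = pw (List.range' a (b - a)) := by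
  rw [eta_split hab hb, mul_inv_cancel_right]

/-- alternating product starting with an inverse -/
def altA (n : ℕ) : List ℕ → FreeGroup ℕ
  | [] => 1
  | [_] => 1
  | b :: c :: L => (eta n b)⁻¹ * eta n c * altA n L

/-- alternating product starting positively -/
def altB (n : ℕ) : List ℕ → FreeGroup ℕ
  | [] => 1
  | [_] => 1
  | b :: c :: L => eta n b * (eta n c)⁻¹ * altB n L

/-- the right letters, in order -/
def Wr (n a : ℕ) : List ℕ → List ℕ
  | [] => List.range' a (n + 1 - a)
  | [_] => []
  | b :: c :: L => List.range' a (b - a) ++ Wr n c L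

/-- the left letters, in order -/
def Wl : List ℕ → List ℕ
  | [] => []
  | [_] => []
  | b :: c :: L => List.range' b (c - b) ++ Wl L

theorem lemA (n : ℕ) : ∀ (L : List ℕ) (a : ℕ), L.Pairwise (· < ·) →
    (∀ x ∈ L, a ≤ x ∧ x ≤ n) → Even L.length →
    eta n a * altA n L = pw (Wr n a L)
  | [], a, _, _, _ => by simp [altA, Wr, eta]
  | [x], a, _, _, he => by simp at he
  | b :: c :: L, a, hp, hb, he => by
    have hbc : b < c := (List.pairwise_cons.mp hp).1 c (by simp)
    have hab : a ≤ b := (hb b (by simp)).1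
    have hbn : b ≤ n := (hb b (by simp)).2
    have hp' : (c :: L).Pairwise (· < ·) := (List.pairwise_cons.mp hp).2
    have hcL : ∀ x ∈ L, c ≤ x ∧ x ≤ n := fun x hx =>
      ⟨le_of_lt ((List.pairwise_cons.mp hp').1 x hx), (hb x (by simp [hx])).2⟩
    have hL : L.Pairwise (· < ·) := (List.pairwise_cons.mp hp').2
    have heL : Even L.length := by simpa [Nat.even_add_one, parity_simps] using he
    have ih := lemA n L c hL hcL heL
    show eta n a * ((eta n b)⁻¹ * eta n c * altA n L) = pw (List.range' a (b - a) ++ Wr n c L)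
    rw [pw_append, ← ih, ← eta_mul_inv_eta (n := n) hab (by omega), mul_assoc ((eta n b)⁻¹),
      ← mul_assoc (eta n a)]

theorem lemB (n : ℕ) : ∀ (L : List ℕ), L.Pairwise (· < ·) →
    (∀ x ∈ L, x ≤ n) → Even L.length →
    altB n L = pw (Wl L)
  | [], _, _, _ => by simp [altB, Wl, pw]
  | [x], _, _, he => by simp at he
  | b :: c :: L, hp, hb, he => by
    have hbc : b < c := (List.pairwise_cons.mp hp).1 c (by simp)
    have hp' : (c :: L).Pairwise (· < ·) := (List.pairwise_cons.mp hp).2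
    have hL : L.Pairwise (· < ·) := (List.pairwise_cons.mp hp').2
    have heL : Even L.length := by simpa [Nat.even_add_one, parity_simps] using he
    have ih := lemB n L hL (fun x hx => hb x (by simp [hx])) heL
    show eta n b * (eta n c)⁻¹ * altB n L = pw (List.range' b (c - b) ++ Wl L)
    rw [pw_append, ← ih, eta_mul_inv_eta (le_of_lt hbc) (by have := hb c (by simp); omega)]

/-- counting function -/
def cnt (L : List ℕ) (j : ℕ) : ℕ := L.countP (fun m => decide (m ≤ j))

theorem lemF (n : ℕ) : ∀ (L : List ℕ) (a : ℕ), L.Pairwise (· < ·) →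
    (∀ x ∈ L, a ≤ x ∧ x ≤ n) → Even L.length →
    ((List.range' a (n + 1 - a)).filter (fun j => decide (Even (cnt L j))) = Wr n a L ∧
     (List.range' a (n + 1 - a)).filter (fun j => ! decide (Even (cnt L j))) = Wl L)
  | [], a, _, _, _ => by
    constructor
    · rw [List.filter_eq_self.mpr]
      · rfl
      · intro x _; simp [cnt]
    · rw [List.filter_eq_nil_iff.mpr]
      · rfl
      · intro x _; simp [cnt]
  | [x], a, _, _, he => by simp at he
  | b :: c :: L, a, hp, hb, he => by
    have hbc : b < c := (List.pairwise_cons.mp hp).1 c (by simp)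
    have hab : a ≤ b := (hb b (by simp)).1
    have hcn : c ≤ n := (hb c (by simp)).2
    have hp' : (c :: L).Pairwise (· < ·) := (List.pairwise_cons.mp hp).2
    have hcL : ∀ x ∈ L, c ≤ x ∧ x ≤ n := fun x hx =>
      ⟨le_of_lt ((List.pairwise_cons.mp hp').1 x hx), (hb x (by simp [hx])).2⟩
    have hL : L.Pairwise (· < ·) := (List.pairwise_cons.mp hp').2
    have heL : Even L.length := by simpa [Nat.even_add_one, parity_simps] using he
    have ih := lemF n L c hL hcL heL
    have hsplit : List.range' a (n + 1 - a) =
        List.range' a (b - a) ++ (List.range' b (c - b) ++ List.range' c (n + 1 - c)) := by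
      rw [← range'_split (a := b) (b := c) (c := n + 1) (le_of_lt hbc) (by omega),
        ← range'_split hab (by omega)]
    -- count values on the three segments
    have hgeb : ∀ x ∈ b :: c :: L, b ≤ x := by
      intro x hx
      rcases List.mem_cons.mp hx with rfl | hx
      · exact le_rfl
      rcases List.mem_cons.mp hx with rfl | hx
      · omega
      · have := (hcL x hx).1; omega
    have hgec : ∀ x ∈ c :: L, c ≤ x := by
      intro x hx
      rcases List.mem_cons.mp hx with rfl | hx
      · exact le_rfl
      · exact (hcL x hx).1
    have hcnt1 : ∀ j ∈ List.range' a (b - a), cnt (b :: c :: L) j = 0 := by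
      intro j hj
      simp only [List.mem_range'_1] at hj
      have hj' : j < b := by omega
      refine List.countP_eq_zero.mpr ?_
      intro x hx
      have := hgeb x hx
      simp only [decide_eq_true_eq]
      omega
    have hcnt2 : ∀ j ∈ List.range' b (c - b), cnt (b :: c :: L) j = 1 := by
      intro j hj
      simp only [List.mem_range'_1] at hj
      have hj1 : b ≤ j := hj.1
      have hj2 : j < c := by omega
      have hz : (c :: L).countP (fun m => decide (m ≤ j)) = 0 := by
        refine List.countP_eq_zero.mpr ?_
        intro x hx
        have := hgec x hx
        simp only [decide_eq_true_eq]
        omega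
      show (b :: c :: L).countP (fun m => decide (m ≤ j)) = 1
      rw [List.countP_cons, hz]
      simp [hj1]
    have hcnt3 : ∀ j ∈ List.range' c (n + 1 - c), cnt (b :: c :: L) j = 2 + cnt L j := by
      intro j hj
      simp only [List.mem_range'_1] at hj
      have hj1 : c ≤ j := hj.1
      have hj2 : b ≤ j := by omega
      show (b :: c :: L).countP (fun m => decide (m ≤ j)) = 2 + cnt L j
      rw [List.countP_cons, List.countP_cons]
      simp only [cnt]
      simp [hj1, hj2]
      omega
    rw [hsplit]
    simp only [List.filter_append]
    constructor
    · rw [List.filter_eq_self.mpr (fun x hx => by simp [hcnt1 x hx]),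
        List.filter_eq_nil_iff.mpr (fun x hx => by simp [hcnt2 x hx]),
        List.filter_congr (p := fun j => decide (Even (cnt (b :: c :: L) j)))
          (q := fun j => decide (Even (cnt L j)))
          (fun x hx => by simp [hcnt3 x hx, Nat.even_add, parity_simps]),
        ih.1]
      show _ = List.range' a (b - a) ++ Wr n c L
      simp
    · rw [List.filter_eq_nil_iff.mpr (fun x hx => by simp [hcnt1 x hx]),
        List.filter_eq_self.mpr (fun x hx => by simp [hcnt2 x hx]),
        List.filter_congr (p := fun j => ! decide (Even (cnt (b :: c :: L) j)))
          (q := fun j => ! decide (Even (cnt L j)))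
          (fun x hx => by simp [hcnt3 x hx, Nat.even_add, parity_simps]),
        ih.2]
      show _ = List.range' b (c - b) ++ Wl L
      simp

end DualRelAux

namespace DualRelAux

theorem mapA (n : ℕ) (f : ℕ → ℕ) : ∀ (t s : ℕ), s % 2 = 0 →
    ((List.range' s (2 * t)).map
      (fun m => if m % 2 = 0 then (eta n (f m))⁻¹ else eta n (f m))).prod =
    altA n ((List.range' s (2 * t)).map f) := by
  intro t
  induction t with
  | zero => intro s _; simp [altA]
  | succ t ih =>
    intro s hs
    rw [show 2 * (t + 1) = (2 * t) + 1 + 1 by ring, List.range'_succ,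
      List.range'_succ]
    simp only [List.map_cons, List.prod_cons]
    rw [if_pos hs, if_neg (by omega)]
    show _ = (eta n (f s))⁻¹ * eta n (f (s + 1)) * altA n _
    rw [← ih (s + 1 + 1) (by omega), mul_assoc]

theorem mapB (n : ℕ) (f : ℕ → ℕ) : ∀ (t s : ℕ), s % 2 = 0 →
    ((List.range' s (2 * t)).map
      (fun m => if m % 2 = 0 then eta n (f m) else (eta n (f m))⁻¹)).prod =
    altB n ((List.range' s (2 * t)).map f) := by
  intro t
  induction t with
  | zero => intro s _; simp [altB]
  | succ t ih =>
    intro s hs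
    rw [show 2 * (t + 1) = (2 * t) + 1 + 1 by ring, List.range'_succ,
      List.range'_succ]
    simp only [List.map_cons, List.prod_cons]
    rw [if_pos hs, if_neg (by omega)]
    show _ = eta n (f s) * (eta n (f (s + 1)))⁻¹ * altB n _
    rw [← ih (s + 1 + 1) (by omega), mul_assoc]

end DualRelAux


open DualRelAux in
/-- Equivalence of the dual relation and the positive homogeneous relation
(Case 1). -/
theorem dual_relation_eq_positive_homogeneous
    (n k : ℕ) (hk : 0 < k) (i : Fin (2 * k) → ℕ)
    (hmono : StrictMono i)
    (hrange : ∀ m : Fin (2 * k), 1 < i m ∧ i m < n) :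
    let γ : ℕ → FreeGroup ℕ := FreeGroup.of
    let η : ℕ → FreeGroup ℕ :=
      fun m => ((List.range' m (n + 1 - m)).map γ).prod
    let E : FreeGroup ℕ :=
      ((List.finRange (2 * k)).map
        (fun m => if m.1 % 2 = 0 then (η (i m))⁻¹ else η (i m))).prod *
      ((List.finRange (2 * k)).map
        (fun m => if m.1 % 2 = 0 then η (i m) else (η (i m))⁻¹)).prod
    let isRight : ℕ → Bool :=
      fun j => decide (Even ((List.finRange (2 * k)).countP
        (fun m => decide (i m ≤ j))))
    let RW : FreeGroup ℕ :=
      (((List.range' 1 n).filter (fun j => isRight j)).map γ).prod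
    let LW : FreeGroup ℕ :=
      (((List.range' 1 n).filter (fun j => ! isRight j)).map γ).prod
    η 1 * E = RW * LW ∧ (E = 1 ↔ η 1 = RW * LW) := by
  intro γ η E isRight RW LW
  -- total extension of `i`
  set i' : ℕ → ℕ := fun m => if h : m < 2 * k then i ⟨m, h⟩ else m + n with hi'
  have hi'eq : ∀ m : Fin (2 * k), i' m.1 = i m := by
    intro m
    simp [hi', m.2]
  set L : List ℕ := (List.range (2 * k)).map i' with hL
  -- basic properties of L
  have hLpair : L.Pairwise (· < ·) := by
    rw [hL, List.pairwise_map]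
    refine (List.pairwise_lt_range (n := 2 * k)).imp_of_mem ?_
    intro a b ha hb hab
    rw [List.mem_range] at ha hb
    have : i' a = i ⟨a, ha⟩ := by simp [hi', ha]
    rw [this, show i' b = i ⟨b, hb⟩ by simp [hi', hb]]
    exact hmono hab
  have hLbd : ∀ x ∈ L, 1 ≤ x ∧ x ≤ n := by
    intro x hx
    rw [hL, List.mem_map] at hx
    obtain ⟨m, hm, rfl⟩ := hx
    rw [List.mem_range] at hm
    rw [show i' m = i ⟨m, hm⟩ by simp [hi', hm]]
    have := hrange ⟨m, hm⟩
    omega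
  have hLlen : Even L.length := by
    rw [hL]; simp [Nat.even_iff]
  -- identify η with eta
  have hη : ∀ m, η m = eta n m := fun m => rfl
  -- the two halves of E
  have hA : ((List.finRange (2 * k)).map
      (fun m => if m.1 % 2 = 0 then (η (i m))⁻¹ else η (i m))).prod = altA n L := by
    have h1 : ((List.finRange (2 * k)).map
        (fun m => if m.1 % 2 = 0 then (η (i m))⁻¹ else η (i m))) =
        ((List.finRange (2 * k)).map Fin.val).map
          (fun m => if m % 2 = 0 then (eta n (i' m))⁻¹ else eta n (i' m)) := by
      rw [List.map_map]
      refine List.map_congr_left ?_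
      intro m _
      simp only [Function.comp, hi'eq m, hη]
    rw [h1, (show ((List.finRange (2 * k)).map Fin.val) = List.range (2 * k) from List.ext_getElem (by simp) (by simp)), List.range_eq_range', mapA n i' k 0 (by omega), hL,
      List.range_eq_range']
  have hB : ((List.finRange (2 * k)).map
      (fun m => if m.1 % 2 = 0 then η (i m) else (η (i m))⁻¹)).prod = altB n L := by
    have h1 : ((List.finRange (2 * k)).map
        (fun m => if m.1 % 2 = 0 then η (i m) else (η (i m))⁻¹)) =
        ((List.finRange (2 * k)).map Fin.val).map
          (fun m => if m % 2 = 0 then eta n (i' m) else (eta n (i' m))⁻¹) := by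
      rw [List.map_map]
      refine List.map_congr_left ?_
      intro m _
      simp only [Function.comp, hi'eq m, hη]
    rw [h1, (show ((List.finRange (2 * k)).map Fin.val) = List.range (2 * k) from List.ext_getElem (by simp) (by simp)), List.range_eq_range', mapB n i' k 0 (by omega), hL,
      List.range_eq_range']
  -- identify isRight with the counting function on L
  have hcount : ∀ j, isRight j = decide (Even (cnt L j)) := by
    intro j
    have : (List.finRange (2 * k)).countP (fun m => decide (i m ≤ j)) = cnt L j := by
      rw [hL, cnt, List.countP_map]
      rw [show ((fun m => decide (m ≤ j)) ∘ i') = ((fun m : ℕ => decide (i' m ≤ j))) from rfl]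
      rw [show (List.range (2 * k)) = (List.finRange (2 * k)).map Fin.val from
        (List.ext_getElem (by simp) (by simp)), List.countP_map]
      refine List.countP_congr ?_
      intro m _
      simp [hi'eq m]
    rw [show isRight j = decide (Even ((List.finRange (2 * k)).countP
      (fun m => decide (i m ≤ j)))) from rfl, this]
  -- main computation
  have hfil := lemF n L 1 hLpair hLbd hLlen
  have hr : List.range' 1 n = List.range' 1 (n + 1 - 1) := by norm_num
  have hRW : RW = pw (Wr n 1 L) := by
    show (((List.range' 1 n).filter (fun j => isRight j)).map γ).prod = _
    rw [show ((List.range' 1 n).filter (fun j => isRight j)) = Wr n 1 L by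
      rw [hr, ← hfil.1]; exact List.filter_congr (fun j _ => hcount j)]
    rfl
  have hLW : LW = pw (Wl L) := by
    show (((List.range' 1 n).filter (fun j => ! isRight j)).map γ).prod = _
    rw [show ((List.range' 1 n).filter (fun j => ! isRight j)) = Wl L by
      rw [hr, ← hfil.2]; exact List.filter_congr (fun j _ => by rw [hcount j])]
    rfl
  have hmain : η 1 * E = RW * LW := by
    show η 1 * (((List.finRange (2 * k)).map
        (fun m => if m.1 % 2 = 0 then (η (i m))⁻¹ else η (i m))).prod *
      ((List.finRange (2 * k)).map
        (fun m => if m.1 % 2 = 0 then η (i m) else (η (i m))⁻¹)).prod) = RW * LW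
    rw [hA, hB, hη, ← mul_assoc, lemA n L 1 hLpair hLbd hLlen,
      lemB n L hLpair (fun x hx => (hLbd x hx).2) hLlen, hRW, hLW]
  refine ⟨hmain, ?_, ?_⟩
  · intro hE
    rw [← hmain, hE, mul_one]
  · intro h
    have : η 1 * E = η 1 * 1 := by rw [mul_one, hmain, h]
    exact mul_left_cancel this
end
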